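/- arXiv:1001.0321 — 6 statements merged into one kernel-verified Lean document; each statement's English description precedes it below -/
import Mathlib

section
/- Let H be a finite group, R a normal subgroup of H, and L a subgroup of H such that LR = H; set Q = L ∩ R. Then the value μ(L, H) of the Möbius function of the lattice of subgroups of H is equal to the value μ(Q, R) of the Möbius function of the poset of subgroups of R that are normalized by L (ordered by inclusion). -/
/-!
For `L ≤ K` the identity `L ⊔ (K ⊓ R) = K` holds because `LR = H` (so `K = L (K ∩ R)`), and for
`L ⊓ R ≤ Y ≤ R` normalized by `L` one has `L ⊔ Y = LY`, whence `(L ⊔ Y) ⊓ R = (L ⊓ R) Y = Y`.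
So `K ↦ K ⊓ R` is an order isomorphism from the interval `[L, H]` of the subgroup lattice onto
the interval `[L ⊓ R, R]` of the poset of `L`-normalized subgroups of `R`. Since the recursion
defining `μ x y` only involves the interval `[x, y]`, downward induction on `x` shows that
Möbius functions agree on isomorphic intervals.
-/

open scoped Pointwise

section Moebius

variable {α β : Type*} [PartialOrder α] [PartialOrder β]

theorem moebius_eq_neg_finsum_Ioc (μ : α → α → ℤ)
    (hμ : ∀ x y, x < y → (∑ᶠ z ∈ {z | x ≤ z ∧ z ≤ y}, μ z y) = 0)
    {x y : α} (hxy : x < y) (hfin : (Set.Ioc x y).Finite) :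
    μ x y = -∑ᶠ z ∈ Set.Ioc x y, μ z y := by
  have h := hμ x y hxy
  rw [show {z | x ≤ z ∧ z ≤ y} = insert x (Set.Ioc x y) from (Set.Ioc_insert_left hxy.le).symm,
    finsum_mem_insert _ Set.left_notMem_Ioc hfin] at h
  omega

theorem moebius_eq_of_orderIso_Icc {a b : α} {c d : β} [Finite (Set.Icc a b)]
    (μ₁ : α → α → ℤ) (hμ₁refl : ∀ x, μ₁ x x = 1)
    (hμ₁sum : ∀ x y, x < y → (∑ᶠ z ∈ {z | x ≤ z ∧ z ≤ y}, μ₁ z y) = 0)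
    (μ₂ : β → β → ℤ) (hμ₂refl : ∀ x, μ₂ x x = 1)
    (hμ₂sum : ∀ x y, x < y → (∑ᶠ z ∈ {z | x ≤ z ∧ z ≤ y}, μ₂ z y) = 0)
    (e : Set.Icc a b ≃o Set.Icc c d) (x : Set.Icc a b) :
    μ₁ x b = μ₂ (e x) d := by
  have hab : a ≤ b := x.2.1.trans x.2.2
  have hcd : c ≤ d := (e x).2.1.trans (e x).2.2
  have : Finite (Set.Icc c d) := Finite.of_equiv _ e.toEquiv
  let top₁ : Set.Icc a b := ⟨b, hab, le_rfl⟩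
  let top₂ : Set.Icc c d := ⟨d, hcd, le_rfl⟩
  have he_top : e top₁ = top₂ :=
    le_antisymm (e top₁).2.2 (e.symm_apply_le.mp (e.symm top₂).2.2)
  induction x using WellFoundedGT.induction with
  | _ x ih =>
    rcases x.2.2.lt_or_eq with hxb | hxb
    · have hex : (e x : β) < d := by
        refine (e x).2.2.lt_of_ne fun h => hxb.ne ?_
        rw [← Subtype.ext_iff.mp (e.injective (he_top.trans (Subtype.ext h.symm)))]
      have hfin₁ : (Set.Ioc (x : α) b).Finite :=
        (Set.toFinite _).subset (Set.Ioc_subset_Icc_self.trans (Set.Icc_subset_Icc_left x.2.1))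
      have hfin₂ : (Set.Ioc (e x : β) d).Finite :=
        (Set.toFinite _).subset (Set.Ioc_subset_Icc_self.trans (Set.Icc_subset_Icc_left (e x).2.1))
      rw [moebius_eq_neg_finsum_Ioc μ₁ hμ₁sum hxb hfin₁,
        moebius_eq_neg_finsum_Ioc μ₂ hμ₂sum hex hfin₂,
        ← Set.image_subtype_val_Icc_Ioi, ← Set.image_subtype_val_Icc_Ioi, ← e.image_Ioi,
        finsum_mem_image Subtype.val_injective.injOn, finsum_mem_image Subtype.val_injective.injOn,
        finsum_mem_image e.injective.injOn]
      congr 1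
      exact finsum_mem_congr rfl ih
    · obtain rfl : x = top₁ := Subtype.ext hxb
      rw [he_top]
      exact (hμ₁refl b).trans (hμ₂refl d).symm

end Moebius

namespace Subgroup

variable {G : Type*} [Group G] {L R K Y : Subgroup G}

abbrev NormalizedSubgroups (R L : Subgroup G) : Type _ :=
  {Y : Subgroup G // Y ≤ R ∧ L ≤ normalizer (Y : Set G)}

theorem sup_inf_eq_of_mul_eq_univ (hLR : (L : Set G) * (R : Set G) = Set.univ) (hLK : L ≤ K) :
    L ⊔ K ⊓ R = K := by
  refine le_antisymm (sup_le hLK inf_le_left) fun k hk => ?_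
  obtain ⟨l, hl, r, hr, rfl⟩ : k ∈ (L : Set G) * R := hLR ▸ Set.mem_univ k
  have hrK : r ∈ K := by simpa using mul_mem (inv_mem (hLK hl)) hk
  exact mul_mem_sup hl ⟨hrK, hr⟩

theorem sup_inf_eq_of_le_normalizer (hYR : Y ≤ R) (hLY : L ≤ normalizer (Y : Set G))
    (hLRY : L ⊓ R ≤ Y) : (L ⊔ Y) ⊓ R = Y := by
  refine le_antisymm (fun x hx => ?_) (le_inf le_sup_right hYR)
  obtain ⟨hx, hxR⟩ := mem_inf.mp hx
  obtain ⟨l, hl, y, hy, rfl⟩ : x ∈ (L : Set G) * Y :=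
    coe_mul_of_left_le_normalizer_right L Y hLY ▸ hx
  have hlR : l ∈ R := by simpa using mul_mem hxR (inv_mem (hYR hy))
  exact mul_mem (hLRY ⟨hl, hlR⟩) hy

theorem le_normalizer_inf_of_le [R.Normal] (hLK : L ≤ K) :
    L ≤ normalizer ((K ⊓ R : Subgroup G) : Set G) :=
  (le_inf (hLK.trans le_normalizer) le_normalizer_of_normal).trans inf_normalizer_le_normalizer_inf

def iccOrderIsoNormalizedSubgroups [R.Normal] (hLR : (L : Set G) * (R : Set G) = Set.univ) :
    Set.Icc L ⊤ ≃o Set.Icc (⟨L ⊓ R, inf_le_right, le_normalizer_inf_of_le le_rfl⟩ :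
      NormalizedSubgroups R L) ⟨R, le_rfl, le_normalizer_of_normal⟩ :=
  Equiv.toOrderIso
    { toFun := fun K => ⟨⟨K.1 ⊓ R, inf_le_right, le_normalizer_inf_of_le K.2.1⟩,
        inf_le_inf_right R K.2.1, (inf_le_right : K.1 ⊓ R ≤ R)⟩
      invFun := fun Y => ⟨L ⊔ Y.1.1, le_sup_left, le_top⟩
      left_inv := fun K => Subtype.ext (sup_inf_eq_of_mul_eq_univ hLR K.2.1)
      right_inv := fun Y =>
        Subtype.ext (Subtype.ext (sup_inf_eq_of_le_normalizer Y.1.2.1 Y.1.2.2 Y.2.1)) }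
    (fun _ _ h => inf_le_inf_right R h) (fun _ _ h => sup_le_sup_left h L)

end Subgroup

/-- Let `H` be a finite group, `R` a normal subgroup of `H`, and `L` a subgroup of `H` with
`LR = H`; set `Q = L ⊓ R`. Then the value `μ₁ L H` of the Möbius function of the lattice of
subgroups of `H` equals the value `μ₂ Q R` of the Möbius function of the poset of subgroups
of `R` normalized by `L`. Here the Möbius functions are characterized by `μ x x = 1` and
`∑_{x ≤ z ≤ y} μ z y = 0` for `x < y`. -/
theorem stmt3 (H : Type*) [Group H] [Fintype H] (R L : Subgroup H) [R.Normal]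
    (hLR : (L : Set H) * (R : Set H) = Set.univ)
    (μ₁ : Subgroup H → Subgroup H → ℤ)
    (hμ₁refl : ∀ X : Subgroup H, μ₁ X X = 1)
    (hμ₁sum : ∀ X Y : Subgroup H, X < Y →
      (∑ᶠ Z ∈ {Z : Subgroup H | X ≤ Z ∧ Z ≤ Y}, μ₁ Z Y) = 0)
    (μ₂ : {Y : Subgroup H // Y ≤ R ∧ L ≤ Subgroup.normalizer (Y : Set H)} →
          {Y : Subgroup H // Y ≤ R ∧ L ≤ Subgroup.normalizer (Y : Set H)} → ℤ)
    (hμ₂refl : ∀ X, μ₂ X X = 1)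
    (hμ₂sum : ∀ X Y, X < Y →
      (∑ᶠ Z ∈ {Z : {Y : Subgroup H // Y ≤ R ∧ L ≤ Subgroup.normalizer (Y : Set H)} | X ≤ Z ∧ Z ≤ Y},
        μ₂ Z Y) = 0)
    (hQmem : L ⊓ R ≤ R ∧ L ≤ Subgroup.normalizer ((L ⊓ R : Subgroup H) : Set H))
    (hRmem : R ≤ R ∧ L ≤ Subgroup.normalizer (R : Set H)) :
    μ₁ L ⊤ = μ₂ ⟨L ⊓ R, hQmem⟩ ⟨R, hRmem⟩ :=
  moebius_eq_of_orderIso_Icc μ₁ hμ₁refl hμ₁sum μ₂ hμ₂refl hμ₂sum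
    (Subgroup.iccOrderIsoNormalizedSubgroups hLR) ⟨L, le_rfl, le_top⟩
end

section
/- Let R be a finite group and σ an automorphism of R. Let Λ denote the poset (ordered by inclusion) of σ-invariant subgroups of R, and let μ_Λ be its Möbius function. Then ∑_{Q ∈ Λ} |{y ∈ Q : σ(y) = y}| · μ_Λ(Q, R) = |{y ∈ R : σ(y) = y and ⟨y⟩ = R}|, i.e. this Möbius-weighted sum of the numbers of σ-fixed points of the σ-invariant subgroups equals the number of σ-fixed generators of R. -/
/-!
Exchanging the two sums turns the left-hand side into a sum over the `σ`-fixed elements `y`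
of `∑_{Q ∈ Λ, y ∈ Q} μ(Q, R)`. For fixed `y` the cyclic group `⟨y⟩` is `σ`-invariant and
`y ∈ Q ↔ ⟨y⟩ ≤ Q`, so this inner sum is `∑_{⟨y⟩ ≤ Q ≤ R} μ(Q, R)`, which is `1` if `⟨y⟩ = R`
and `0` otherwise.
-/

section Moebius

variable {α M : Type*} [PartialOrder α]

theorem finsum_mem_moebius_Icc_eq_ite [DecidableEq α] [AddCommMonoidWithOne M] (μ : α → α → M)
    (hμrefl : ∀ a, μ a a = 1)
    (hμsum : ∀ a b, a < b → (∑ᶠ z ∈ {z | a ≤ z ∧ z ≤ b}, μ z b) = 0)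
    {a b : α} (hab : a ≤ b) :
    (∑ᶠ z ∈ {z | a ≤ z ∧ z ≤ b}, μ z b) = if a = b then 1 else 0 := by
  rcases hab.eq_or_lt with rfl | hlt
  · have hIcc : {z | a ≤ z ∧ z ≤ a} = {a} := by
      ext z
      simp only [Set.mem_ofPred_eq, Set.mem_singleton_iff, le_antisymm_iff, and_comm]
    rw [hIcc, finsum_mem_singleton, hμrefl, if_pos rfl]
  · rw [hμsum a b hlt, if_neg hlt.ne]

theorem sum_card_le_mul_moebius_eq_card [Fintype α] {β : Type*} [Fintype β] [NonAssocSemiring M]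
    (μ : α → α → M) (hμrefl : ∀ a, μ a a = 1)
    (hμsum : ∀ a b, a < b → (∑ᶠ z ∈ {z | a ≤ z ∧ z ≤ b}, μ z b) = 0)
    (f : β → α) {T : α} (hT : ∀ a, a ≤ T) :
    ∑ a, (Nat.card {y // f y ≤ a} : M) * μ a T = Nat.card {y // f y = T} := by
  classical
  have hinner : ∀ y, ∑ a, (if f y ≤ a then μ a T else 0) = if f y = T then 1 else 0 := by
    intro y
    have hset : {z | f y ≤ z ∧ z ≤ T} = ↑(Finset.univ.filter (f y ≤ ·)) := by
      ext z
      simp [hT z]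
    rw [← finsum_mem_moebius_Icc_eq_ite μ hμrefl hμsum (hT (f y)), hset,
      finsum_mem_coe_finset, Finset.sum_filter]
  simp only [Nat.card_eq_fintype_card, Fintype.card_subtype, Finset.card_filter,
    Nat.cast_sum, Nat.cast_ite, Nat.cast_one, Nat.cast_zero, Finset.sum_mul, ite_mul, one_mul,
    zero_mul]
  rw [Finset.sum_comm]
  exact Finset.sum_congr rfl fun y _ => hinner y

end Moebius

theorem Subgroup.map_zpowers_of_apply_eq {G : Type*} [Group G] (σ : G →* G) {y : G}
    (hy : σ y = y) : (Subgroup.zpowers y).map σ = Subgroup.zpowers y := by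
  rw [MonoidHom.map_zpowers, hy]

/-- Let `R` be a finite group and `σ` an automorphism of `R`. Let `Λ` be the poset of
`σ`-invariant subgroups of `R` and `μ` its Möbius function (characterized by `μ Q Q = 1`
and `∑_{Q₁ ≤ Z ≤ Q₂} μ Z Q₂ = 0` for `Q₁ < Q₂`). Then
`∑_{Q ∈ Λ} |{y ∈ Q : σ y = y}| · μ Q R = |{y ∈ R : σ y = y and ⟨y⟩ = R}|`. -/
theorem stmt4 (R : Type*) [Group R] [Fintype R] (σ : R ≃* R)
    (μ : {Q : Subgroup R // Q.map σ.toMonoidHom = Q} →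
         {Q : Subgroup R // Q.map σ.toMonoidHom = Q} → ℤ)
    (hμrefl : ∀ Q, μ Q Q = 1)
    (hμsum : ∀ Q₁ Q₂, Q₁ < Q₂ →
      (∑ᶠ Z ∈ {Z : {Q : Subgroup R // Q.map σ.toMonoidHom = Q} | Q₁ ≤ Z ∧ Z ≤ Q₂},
        μ Z Q₂) = 0)
    (hTop : (⊤ : Subgroup R).map σ.toMonoidHom = ⊤) :
    (∑ᶠ Q : {Q : Subgroup R // Q.map σ.toMonoidHom = Q},
        (Nat.card {y : R // y ∈ Q.1 ∧ σ y = y} : ℤ) * μ Q ⟨⊤, hTop⟩)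
      = (Nat.card {y : R // σ y = y ∧ Subgroup.zpowers y = ⊤} : ℤ) := by
  classical
  let Λ := {Q : Subgroup R // Q.map σ.toMonoidHom = Q}
  let _ : Fintype Λ := Fintype.ofFinite Λ
  let cyclic : {y : R // σ y = y} → Λ := fun y =>
    ⟨Subgroup.zpowers y.1, Subgroup.map_zpowers_of_apply_eq σ.toMonoidHom y.2⟩
  have hfixed (Q : Λ) : Nat.card {y : R // y ∈ Q.1 ∧ σ y = y} = Nat.card {y // cyclic y ≤ Q} :=
    Nat.card_congr <| .symm <|
      (Equiv.subtypeSubtypeEquivSubtypeInter (fun y => σ y = y) (Subgroup.zpowers · ≤ Q.1)).trans <|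
        Equiv.subtypeEquivRight fun y => by rw [Subgroup.zpowers_le, and_comm]
  have hgen : Nat.card {y : R // σ y = y ∧ Subgroup.zpowers y = ⊤}
      = Nat.card {y // cyclic y = ⟨⊤, hTop⟩} :=
    Nat.card_congr <| .symm <| (Equiv.subtypeEquivRight fun _ => Subtype.ext_iff).trans <|
      Equiv.subtypeSubtypeEquivSubtypeInter (fun y => σ y = y) (Subgroup.zpowers · = ⊤)
  rw [finsum_eq_sum_of_fintype, hgen, ← sum_card_le_mul_moebius_eq_card μ hμrefl hμsum cyclic
    (fun Q => (le_top : Q.1 ≤ ⊤))]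
  simp only [hfixed]
end

section
/- Let A be a finite abelian group. Then, as an identity of rational numbers, the sum over all subgroups Q of A such that the quotient A/Q is cyclic of φ(|A/Q|)/|A/Q| is equal to ∑_{x ∈ A} 1/(order of x), where φ is the Euler totient function. -/
open Subgroup Finset

namespace Stmt5Aux

lemma enough (A : Type*) [CommGroup A] [Finite A] :
    HasEnoughRootsOfUnity ℂ (Monoid.exponent A) := by
  have h : (Monoid.exponent A : ℂ) ≠ 0 := by
    exact_mod_cast Monoid.exponent_ne_zero_of_finite (G := A)
  have : NeZero ((Monoid.exponent A : ℂ)) := ⟨h⟩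
  infer_instance

lemma dual_card (A : Type*) [CommGroup A] [Finite A] :
    Nat.card (A →* ℂˣ) = Nat.card A := by
  have := enough A
  obtain ⟨e⟩ := CommGroup.monoidHom_mulEquiv_of_hasEnoughRootsOfUnity A ℂ
  exact Nat.card_congr e.toEquiv

lemma dual_finite (A : Type*) [CommGroup A] [Finite A] : Finite (A →* ℂˣ) := by
  have := enough A
  obtain ⟨e⟩ := CommGroup.monoidHom_mulEquiv_of_hasEnoughRootsOfUnity A ℂ
  exact Finite.of_equiv A e.symm.toEquiv

variable {A : Type*} [CommGroup A] [Finite A]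

/-- Characters of the quotient correspond to characters vanishing on the subgroup. -/
noncomputable def quotEquiv (N : Subgroup A) :
    (A ⧸ N →* ℂˣ) ≃ {χ : A →* ℂˣ // N ≤ χ.ker} where
  toFun ψ := ⟨ψ.comp (QuotientGroup.mk' N), by
    intro x hx
    simp only [MonoidHom.mem_ker, MonoidHom.comp_apply, QuotientGroup.mk'_apply]
    rw [(QuotientGroup.eq_one_iff x).mpr hx, map_one]⟩
  invFun χ := QuotientGroup.lift N χ.1 (fun x hx => χ.2 hx)
  left_inv ψ := by
    apply QuotientGroup.monoidHom_ext
    ext x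
    simp
  right_inv χ := by
    ext x
    simp

lemma ker_comp_mk' (N : Subgroup A) (ψ : A ⧸ N →* ℂˣ) :
    (ψ.comp (QuotientGroup.mk' N)).ker = ψ.ker.comap (QuotientGroup.mk' N) :=
  (MonoidHom.comap_ker _ _).symm

/-- Characters with kernel exactly `Q` correspond to injective characters of `A ⧸ Q`. -/
noncomputable def kerEquiv (Q : Subgroup A) :
    {ψ : A ⧸ Q →* ℂˣ // ψ.ker = ⊥} ≃ {χ : A →* ℂˣ // χ.ker = Q} := by
  have hker : ∀ ψ : A ⧸ Q →* ℂˣ, (ψ.comp (QuotientGroup.mk' Q)).ker = Q ↔ ψ.ker = ⊥ := by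
    intro ψ
    rw [ker_comp_mk' Q ψ]
    constructor
    · intro h
      apply comap_injective (QuotientGroup.mk'_surjective Q)
      rw [h]
      simpa using (QuotientGroup.ker_mk' Q).symm
    · intro h
      rw [h]
      simpa using QuotientGroup.ker_mk' Q
  exact
  { toFun := fun ψ => ⟨ψ.1.comp (QuotientGroup.mk' Q), (hker ψ.1).mpr ψ.2⟩
    invFun := fun χ => ⟨QuotientGroup.lift Q χ.1 (fun x hx => by
        have : x ∈ χ.1.ker := by rw [χ.2]; exact hx
        exact this), by
      have hcomp : (QuotientGroup.lift Q χ.1 (fun x hx => by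
          have : x ∈ χ.1.ker := by rw [χ.2]; exact hx
          exact this)).comp (QuotientGroup.mk' Q) = χ.1 := by
        ext x; simp
      rw [← hker, hcomp, χ.2]⟩
    left_inv := fun ψ => by
      apply Subtype.ext
      apply QuotientGroup.monoidHom_ext
      ext x
      simp
    right_inv := fun χ => by
      apply Subtype.ext
      ext x
      simp }


lemma card_chi_eq_one (x : A) :
    Nat.card {χ : A →* ℂˣ // χ x = 1} * orderOf x = Nat.card A := by
  have e1 : {χ : A →* ℂˣ // χ x = 1} ≃ {χ : A →* ℂˣ // Subgroup.zpowers x ≤ χ.ker} := by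
    apply Equiv.subtypeEquiv (Equiv.refl _)
    intro χ
    simp [zpowers_le, MonoidHom.mem_ker]
  have h1 : Nat.card {χ : A →* ℂˣ // χ x = 1} = Nat.card (A ⧸ Subgroup.zpowers x) := by
    rw [Nat.card_congr (e1.trans (quotEquiv (Subgroup.zpowers x)).symm)]
    exact dual_card _
  rw [h1, ← Nat.card_zpowers x]
  exact (Subgroup.card_eq_card_quotient_mul_card_subgroup (Subgroup.zpowers x)).symm

lemma isCyclic_quot_ker (χ : A →* ℂˣ) : IsCyclic (A ⧸ χ.ker) := by
  have e := QuotientGroup.quotientKerEquivRange χ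
  have : Finite (A ⧸ χ.ker) := Quotient.finite _
  have : Finite χ.range := Finite.of_equiv _ e.toEquiv
  have : IsCyclic χ.range := subgroup_units_cyclic χ.range
  exact isCyclic_of_surjective e.symm e.symm.surjective

lemma count_faithful (C : Type*) [CommGroup C] [Finite C] [IsCyclic C] :
    Nat.card {ψ : C →* ℂˣ // ψ.ker = ⊥} = Nat.totient (Nat.card C) := by
  classical
  have hfin : Finite (C →* ℂˣ) := dual_finite C
  have := Fintype.ofFinite (C →* ℂˣ)
  have := Fintype.ofFinite C
  have hcard : Nat.card (C →* ℂˣ) = Nat.card C := dual_card C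
  have hcyc : IsCyclic (C →* ℂˣ) := by
    have := enough C
    obtain ⟨e⟩ := CommGroup.monoidHom_mulEquiv_of_hasEnoughRootsOfUnity C ℂ
    exact isCyclic_of_surjective e.symm e.symm.surjective
  obtain ⟨g, hg⟩ := IsCyclic.exists_generator (α := C)
  have horder : orderOf g = Nat.card C := orderOf_eq_card_of_forall_mem_zpowers hg
  have key : ∀ ψ : C →* ℂˣ, ψ.ker = ⊥ ↔ orderOf ψ = Nat.card C := by
    intro ψ
    have hord : orderOf ψ = orderOf (ψ g) := by
      rw [orderOf_eq_orderOf_iff]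
      intro k
      constructor
      · intro h
        calc ψ g ^ k = (ψ ^ k) g := by simp
        _ = 1 := by rw [h]; rfl
      · intro h
        refine DFunLike.ext _ _ fun y => ?_
        obtain ⟨m, hm⟩ := hg y
        have hm' : g ^ m = y := hm
        calc (ψ ^ k) y = ψ y ^ k := by simp
        _ = ψ (g ^ m) ^ k := by rw [hm']
        _ = (ψ g ^ k) ^ m := by rw [map_zpow]; rw [← zpow_natCast, ← zpow_natCast, ← zpow_mul, ← zpow_mul, mul_comm]
        _ = 1 := by rw [h, one_zpow]
    rw [hord]
    constructor
    · intro h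
      have hinj : Function.Injective ψ := (MonoidHom.ker_eq_bot_iff ψ).mp h
      rw [orderOf_injective ψ hinj g, horder]
    · intro h
      rw [eq_bot_iff]
      intro y hy
      obtain ⟨m, hm⟩ := hg y
      have hm' : g ^ m = y := hm
      have hy1 : ψ y = 1 := hy
      have : ψ g ^ m = 1 := by rw [← map_zpow, hm']; exact hy1
      have hdvd : ((orderOf (ψ g)) : ℤ) ∣ m := orderOf_dvd_iff_zpow_eq_one.mpr this
      rw [h] at hdvd
      have : g ^ m = 1 := by
        apply orderOf_dvd_iff_zpow_eq_one.mp
        rw [horder]; exact hdvd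
      rw [hm'] at this
      simp [this]
  have : Nat.card {ψ : C →* ℂˣ // ψ.ker = ⊥}
      = Nat.card {ψ : C →* ℂˣ // orderOf ψ = Nat.card C} := by
    apply Nat.card_congr
    exact Equiv.subtypeEquiv (Equiv.refl _) (fun ψ => by simpa using key ψ)
  rw [this, Nat.card_eq_fintype_card, Fintype.card_subtype]
  apply IsCyclic.card_orderOf_eq_totient
  rw [← hcard, Nat.card_eq_fintype_card]

lemma count_ker_eq (Q : Subgroup A) (hQ : IsCyclic (A ⧸ Q)) :
    Nat.card {χ : A →* ℂˣ // χ.ker = Q} = Nat.totient (Nat.card (A ⧸ Q)) := by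
  have : Finite (A ⧸ Q) := Quotient.finite _
  rw [← Nat.card_congr (kerEquiv Q)]
  exact count_faithful (A ⧸ Q)

end Stmt5Aux

/-- Let `A` be a finite abelian group. Then, in `ℚ`, the sum over all subgroups `Q` of `A`
such that `A/Q` is cyclic of `φ(|A/Q|)/|A/Q|` equals `∑_{x ∈ A} 1/(order of x)`, where `φ`
is the Euler totient function. -/
theorem stmt5 (A : Type*) [CommGroup A] [Fintype A] :
    (∑ᶠ Q ∈ {Q : Subgroup A | IsCyclic (A ⧸ Q)},
        (Nat.totient (Nat.card (A ⧸ Q)) : ℚ) / (Nat.card (A ⧸ Q) : ℚ))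
      = ∑ x : A, (1 : ℚ) / (orderOf x : ℚ) := by
  classical
  have hfinSub : Finite (Subgroup A) :=
    Finite.of_injective (fun Q : Subgroup A => (Q : Set A)) SetLike.coe_injective
  have instSub := Fintype.ofFinite (Subgroup A)
  have hfinD : Finite (A →* ℂˣ) := Stmt5Aux.dual_finite A
  have instD := Fintype.ofFinite (A →* ℂˣ)
  have hApos : (0 : ℚ) < (Nat.card A : ℚ) := by
    exact_mod_cast Nat.card_pos (α := A)
  set T : Finset (Subgroup A) := Finset.univ.filter fun Q => IsCyclic (A ⧸ Q) with hT
  have hset : {Q : Subgroup A | IsCyclic (A ⧸ Q)} = ↑T := by ext Q; simp [hT]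
  rw [hset, finsum_mem_coe_finset]
  have hstep1 : ∀ Q ∈ T, (Nat.totient (Nat.card (A ⧸ Q)) : ℚ) / (Nat.card (A ⧸ Q) : ℚ)
      = ((Nat.card {χ : A →* ℂˣ // χ.ker = Q} : ℚ) * (Nat.card Q : ℚ)) / (Nat.card A : ℚ) := by
    intro Q hQ
    have hcyc : IsCyclic (A ⧸ Q) := by
      have := Finset.mem_filter.mp hQ
      exact this.2
    rw [Stmt5Aux.count_ker_eq Q hcyc,
      Subgroup.card_eq_card_quotient_mul_card_subgroup Q]
    have h1 : (0 : ℚ) < (Nat.card (A ⧸ Q) : ℚ) := by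
      exact_mod_cast Nat.card_pos (α := A ⧸ Q)
    have h2 : (0 : ℚ) < (Nat.card Q : ℚ) := by
      exact_mod_cast Nat.card_pos (α := Q)
    push_cast
    field_simp
  rw [Finset.sum_congr rfl hstep1, ← Finset.sum_div]
  have hfiber : ∀ Q ∈ T, ((Nat.card {χ : A →* ℂˣ // χ.ker = Q} : ℚ) * (Nat.card Q : ℚ))
      = ∑ χ ∈ Finset.univ.filter (fun χ : A →* ℂˣ => χ.ker = Q), (Nat.card χ.ker : ℚ) := by
    intro Q hQ
    rw [Finset.sum_congr rfl (fun χ hχ => by rw [(Finset.mem_filter.mp hχ).2]),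
      Finset.sum_const, nsmul_eq_mul]
    congr 1
    rw [Nat.card_eq_fintype_card, Fintype.card_subtype]
  have hmain : ∑ Q ∈ T, ∑ χ ∈ Finset.univ.filter (fun χ : A →* ℂˣ => χ.ker = Q),
      (Nat.card χ.ker : ℚ) = ∑ χ : A →* ℂˣ, (Nat.card χ.ker : ℚ) :=
    Finset.sum_fiberwise_of_maps_to (fun χ _ => by
      simp only [hT, Finset.mem_filter, Finset.mem_univ, true_and]
      exact Stmt5Aux.isCyclic_quot_ker χ) (fun χ : A →* ℂˣ => (Nat.card χ.ker : ℚ))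
  rw [Finset.sum_congr rfl hfiber, hmain]
  have hker_count : ∀ χ : A →* ℂˣ, (Nat.card χ.ker : ℚ)
      = ∑ x : A, (if χ x = 1 then (1 : ℚ) else 0) := by
    intro χ
    rw [Finset.sum_boole]
    congr 1
    rw [Nat.card_eq_fintype_card]
    rw [show Fintype.card χ.ker = Fintype.card {x : A // χ x = 1} from
      Fintype.card_congr (Equiv.subtypeEquiv (Equiv.refl A)
        (fun x => by simp [MonoidHom.mem_ker]))]
    rw [Fintype.card_subtype]
  rw [Finset.sum_congr rfl (fun χ _ => hker_count χ), Finset.sum_comm]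
  have hx_count : ∀ x : A, ∑ χ : A →* ℂˣ, (if χ x = 1 then (1 : ℚ) else 0)
      = (Nat.card {χ : A →* ℂˣ // χ x = 1} : ℚ) := by
    intro x
    rw [Finset.sum_boole, Nat.card_eq_fintype_card, Fintype.card_subtype]
  rw [Finset.sum_congr rfl (fun x _ => hx_count x), Finset.sum_div]
  apply Finset.sum_congr rfl
  intro x _
  have h := Stmt5Aux.card_chi_eq_one (A := A) x
  have hord : (0 : ℚ) < (orderOf x : ℚ) := by
    exact_mod_cast orderOf_pos x
  have hq : (Nat.card {χ : A →* ℂˣ // χ x = 1} : ℚ) * (orderOf x : ℚ) = (Nat.card A : ℚ) := by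
    exact_mod_cast congrArg (Nat.cast : ℕ → ℚ) h
  rw [div_eq_div_iff hApos.ne' hord.ne', one_mul]
  exact hq
end

section
/- Let A be a finite abelian group and n a positive integer. Then the number of subgroups Q of A such that the quotient A/Q is cyclic of order n is equal to the number of cyclic subgroups of A of order n. -/
open MonoidHom

section Dual

variable {A : Type*} [CommGroup A] [Finite A]

lemma dualEquiv (G : Type*) [CommGroup G] [Finite G] : Nonempty ((G →* ℂˣ) ≃* G) := by
  have : NeZero (Monoid.exponent G) := ⟨Monoid.exponent_ne_zero_of_finite⟩
  exact CommGroup.monoidHom_mulEquiv_of_hasEnoughRootsOfUnity G ℂ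

lemma sepDual {G : Type*} [CommGroup G] [Finite G] {a : G} (ha : a ≠ 1) :
    ∃ φ : G →* ℂˣ, φ a ≠ 1 := by
  have : NeZero (Monoid.exponent G) := ⟨Monoid.exponent_ne_zero_of_finite⟩
  exact CommGroup.exists_apply_ne_one_of_hasEnoughRootsOfUnity G ℂ ha

/-- Annihilator of a subgroup. -/
def perp (Q : Subgroup A) : Subgroup (A →* ℂˣ) where
  carrier := {χ | ∀ a ∈ Q, χ a = 1}
  one_mem' := by intro a _; rfl
  mul_mem' := by intro x y hx hy a ha; simp [hx a ha, hy a ha]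
  inv_mem' := by intro x hx a ha; simp [hx a ha]

lemma mem_perp {Q : Subgroup A} {χ : A →* ℂˣ} : χ ∈ perp Q ↔ ∀ a ∈ Q, χ a = 1 := Iff.rfl

/-- `perp Q` is the dual of `A ⧸ Q`. -/
def perpEquiv (Q : Subgroup A) : ((A ⧸ Q) →* ℂˣ) ≃* perp Q where
  toFun φ := ⟨φ.comp (QuotientGroup.mk' Q), fun a ha => by
    simp [(QuotientGroup.eq_one_iff a).mpr ha]⟩
  invFun χ := QuotientGroup.lift Q χ.1 fun a ha => χ.2 a ha
  left_inv φ := MonoidHom.ext fun x => QuotientGroup.induction_on x fun a => rfl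
  right_inv χ := Subtype.ext (MonoidHom.ext fun a => rfl)
  map_mul' φ ψ := rfl

noncomputable def perpQuotEquiv (Q : Subgroup A) : perp Q ≃* (A ⧸ Q) :=
  (perpEquiv Q).symm.trans (dualEquiv (A ⧸ Q)).some

/-- evaluation hom -/
def evHom (H : Subgroup (A →* ℂˣ)) : A →* ((H : Type _) →* ℂˣ) where
  toFun a := { toFun := fun χ => (χ : A →* ℂˣ) a,
               map_one' := rfl, map_mul' := fun x y => rfl }
  map_one' := by ext χ; simp
  map_mul' x y := by ext χ; simp

def perp' (H : Subgroup (A →* ℂˣ)) : Subgroup A := (evHom H).ker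

lemma mem_perp' {H : Subgroup (A →* ℂˣ)} {a : A} :
    a ∈ perp' H ↔ ∀ χ ∈ H, χ a = 1 := by
  constructor
  · intro h χ hχ
    exact congrArg (fun f => f ⟨χ, hχ⟩) h
  · intro h
    exact MonoidHom.ext fun χ => h χ.1 χ.2

lemma perp'_perp (Q : Subgroup A) : perp' (perp Q) = Q := by
  ext a
  rw [mem_perp']
  constructor
  · intro h
    by_contra ha
    have hne : (QuotientGroup.mk a : A ⧸ Q) ≠ 1 := by
      simpa [QuotientGroup.eq_one_iff] using ha
    obtain ⟨φ, hφ⟩ := sepDual hne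
    exact hφ (h (φ.comp (QuotientGroup.mk' Q))
      (fun b hb => by simp [(QuotientGroup.eq_one_iff b).mpr hb]))
  · intro ha χ hχ
    exact hχ a ha

lemma le_perp_perp' (H : Subgroup (A →* ℂˣ)) : H ≤ perp (perp' H) := by
  intro χ hχ a ha
  exact (mem_perp'.mp ha) χ hχ

end Dual

section Counting

variable {A : Type*} [CommGroup A] [Finite A]

instance instFiniteDual (G : Type*) [CommGroup G] [Finite G] : Finite (G →* ℂˣ) :=
  Finite.of_equiv G (dualEquiv G).some.symm.toEquiv

lemma card_dual (G : Type*) [CommGroup G] [Finite G] :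
    Nat.card (G →* ℂˣ) = Nat.card G := Nat.card_congr (dualEquiv G).some.toEquiv

lemma isCyclic_dual (G : Type*) [CommGroup G] [Finite G] [IsCyclic G] :
    IsCyclic (G →* ℂˣ) :=
  isCyclic_of_surjective (dualEquiv G).some.symm (dualEquiv G).some.symm.surjective

lemma card_perp (Q : Subgroup A) : Nat.card (perp Q) = Nat.card (A ⧸ Q) :=
  Nat.card_congr (perpQuotEquiv Q).toEquiv

lemma isCyclic_perp_iff (Q : Subgroup A) : IsCyclic (perp Q) ↔ IsCyclic (A ⧸ Q) := by
  constructor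
  · intro h
    exact isCyclic_of_surjective (perpQuotEquiv Q) (perpQuotEquiv Q).surjective
  · intro h
    exact isCyclic_of_surjective (perpQuotEquiv Q).symm (perpQuotEquiv Q).symm.surjective

lemma card_quot_perp'_le (H : Subgroup (A →* ℂˣ)) :
    Nat.card (A ⧸ perp' H) ≤ Nat.card H := by
  have e := QuotientGroup.quotientKerEquivRange (evHom (A := A) H)
  have h1 : Nat.card (A ⧸ perp' H) = Nat.card (evHom (A := A) H).range :=
    Nat.card_congr e.toEquiv
  rw [h1]
  calc Nat.card (evHom (A := A) H).range ≤ Nat.card ((H : Type _) →* ℂˣ) :=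
        Subgroup.card_le_card_group _
    _ = Nat.card H := card_dual _

lemma card_quot_perp' (H : Subgroup (A →* ℂˣ)) :
    Nat.card (A ⧸ perp' H) = Nat.card H := by
  refine le_antisymm (card_quot_perp'_le H) ?_
  have := Subgroup.card_le_of_le (le_perp_perp' H)
  rwa [card_perp] at this

lemma perp_perp' (H : Subgroup (A →* ℂˣ)) : perp (perp' H) = H :=
  (Subgroup.eq_of_le_of_card_ge (le_perp_perp' H)
    (by rw [card_perp, card_quot_perp'])).symm

lemma isCyclic_quot_perp' (H : Subgroup (A →* ℂˣ)) [IsCyclic H] :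
    IsCyclic (A ⧸ perp' H) := by
  have : IsCyclic ((H : Type _) →* ℂˣ) := isCyclic_dual H
  have : IsCyclic (evHom (A := A) H).range := Subgroup.isCyclic _
  have e := QuotientGroup.quotientKerEquivRange (evHom (A := A) H)
  exact isCyclic_of_surjective e.symm e.symm.surjective

end Counting

/-- Let `A` be a finite abelian group and `n` a positive integer. Then the number of
subgroups `Q` of `A` such that the quotient `A/Q` is cyclic of order `n` is equal to the
number of cyclic subgroups of `A` of order `n`. -/
theorem stmt6 (A : Type*) [CommGroup A] [Fintype A] (n : ℕ) (hn : 0 < n) :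
    Nat.card {Q : Subgroup A // IsCyclic (A ⧸ Q) ∧ Nat.card (A ⧸ Q) = n}
      = Nat.card {Q : Subgroup A // IsCyclic Q ∧ Nat.card Q = n} := by
  classical
  -- Step 1: bijection with cyclic subgroups of the dual of order n
  have e1 : {Q : Subgroup A // IsCyclic (A ⧸ Q) ∧ Nat.card (A ⧸ Q) = n} ≃
      {H : Subgroup (A →* ℂˣ) // IsCyclic H ∧ Nat.card H = n} :=
  { toFun := fun Q => ⟨perp Q.1, (isCyclic_perp_iff Q.1).mpr Q.2.1,
      by rw [card_perp, Q.2.2]⟩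
    invFun := fun H => ⟨perp' H.1,
      by have := H.2.1; exact isCyclic_quot_perp' H.1,
      by rw [card_quot_perp', H.2.2]⟩
    left_inv := fun Q => Subtype.ext (perp'_perp Q.1)
    right_inv := fun H => Subtype.ext (perp_perp' H.1) }
  -- Step 2: transport along an isomorphism of the dual with A
  let eD : (A →* ℂˣ) ≃* A := (dualEquiv A).some
  have e2 : {H : Subgroup (A →* ℂˣ) // IsCyclic H ∧ Nat.card H = n} ≃
      {Q : Subgroup A // IsCyclic Q ∧ Nat.card Q = n} := by
    refine Equiv.subtypeEquiv eD.mapSubgroup.toEquiv fun H => ?_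
    have eH : (H : Type _) ≃* (eD.mapSubgroup H : Subgroup A) := eD.subgroupMap H
    constructor
    · rintro ⟨h1, h2⟩
      exact ⟨isCyclic_of_surjective eH eH.surjective,
        ((Nat.card_congr eH.toEquiv).symm.trans h2 :)⟩
    · rintro ⟨h1, h2⟩
      have h2' : Nat.card (eD.mapSubgroup H) = n := h2
      have h1' : IsCyclic (eD.mapSubgroup H) := h1
      exact ⟨isCyclic_of_surjective eH.symm eH.symm.surjective,
        (Nat.card_congr eH.toEquiv).trans h2'⟩
  rw [Nat.card_congr (e1.trans e2)]
end

section
/- Let p be a prime, G a finite group, R a normal subgroup of G which is a p-group, and s ∈ G an element of order coprime to p such that G = R⟨s⟩ (that is, R together with s generates G). Then a subgroup L of G satisfies LR = G if and only if there exists x ∈ R such that the conjugate s^x = x⁻¹sx belongs to L; moreover, in that case L = (L ∩ R)⟨s^x⟩ and the subgroup L ∩ R is normalized by s^x. -/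
/-!
The heart of the matter is the conjugacy half of Schur–Zassenhaus for a normal `p`-subgroup `R`:
any two complements of `R` are conjugate by an element of `R`. For abelian `R` this is the
transitivity of the action on `R.QuotientDiff`. In general one inducts on `|G|`: the centre `Z`
of `R` is nontrivial and normal in `G`, so by induction in `G ⧸ Z` a conjugate `A'` of `A`
satisfies `A' ⊔ Z = B ⊔ Z`, and the abelian case inside `B ⊔ Z` finishes.

Since `R ∩ ⟨s⟩ = 1` by coprimality, `⟨s⟩` is a complement of `R`. If `LR = G`, Schur–Zassenhaus
in `L` yields a complement `K ≤ L` of `R`, and `K` is an `R`-conjugate of `⟨s⟩`. Conversely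
`s^x ∈ L` gives `LR ⊇ R⟨s^x⟩ = G`, and then `L = (L ∩ R)⟨s^x⟩` is Dedekind's modular law.
-/

open scoped Pointwise

namespace Subgroup

variable {G : Type*} [Group G]

theorem isComplement'_of_isCompl {H K : Subgroup G} [H.Normal] (h : IsCompl H K) :
    IsComplement' H K :=
  isComplement'_of_disjoint_and_mul_eq_univ h.disjoint
    (by rw [← normal_mul, h.sup_eq_top, coe_top])

theorem IsComplement'.map_conj {H K : Subgroup G} [H.Normal] (h : IsComplement' H K) (x : G) :
    IsComplement' H (K.map (MulAut.conj x).toMonoidHom) := by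
  have := (MulAut.conj x).mapSubgroup.isCompl h.isCompl
  rw [MulEquiv.coe_mapSubgroup,
    show H.map (MulAut.conj x).toMonoidHom = H from Normal.map_conj_eq H x] at this
  exact isComplement'_of_isCompl this

theorem IsComplement'.map_of_ker_le {G' : Type*} [Group G'] {N K : Subgroup G} [N.Normal]
    (h : IsComplement' N K) {f : G →* G'} (hf : Function.Surjective f) (hker : f.ker ≤ N) :
    IsComplement' (N.map f) (K.map f) := by
  have : (N.map f).Normal := Normal.map ‹_› f hf
  refine isComplement'_of_isCompl ⟨disjoint_def.mpr ?_, codisjoint_iff.mpr ?_⟩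
  · rintro _ hN ⟨k, hk, rfl⟩
    rw [← mem_comap, comap_map_eq, sup_of_le_left hker] at hN
    rw [disjoint_def.mp h.disjoint hN hk, map_one]
  · rw [← map_sup, h.sup_eq_top, map_top_of_surjective f hf]

theorem map_map_conj {G' : Type*} [Group G'] (f : G →* G') (x : G) (H : Subgroup G) :
    (H.map (MulAut.conj x).toMonoidHom).map f = (H.map f).map (MulAut.conj (f x)).toMonoidHom := by
  simp only [map_map]
  congr 1
  ext g
  simp [MulAut.conj_apply]

theorem map_conj_map_conj (x y : G) (H : Subgroup G) :
    (H.map (MulAut.conj x).toMonoidHom).map (MulAut.conj y).toMonoidHom =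
      H.map (MulAut.conj (y * x)).toMonoidHom := by
  simp only [map_map]
  congr 1
  ext g
  simp [MulAut.conj_apply, mul_assoc]

section Abelian

variable {H : Subgroup G} [IsMulCommutative H]

noncomputable def IsComplement'.quotientDiffMk [H.FiniteIndex] {K : Subgroup G}
    (hK : IsComplement' K H) : H.QuotientDiff :=
  Quotient.mk'' ⟨K, hK⟩

variable [Finite G] [H.Normal]

theorem stabilizer_quotientDiffMk (hH : (Nat.card H).Coprime H.index) {K : Subgroup G}
    (hK : IsComplement' K H) : MulAction.stabilizer G hK.quotientDiffMk = K := by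
  refine (eq_of_le_of_card_ge (fun k hk => ?_) ?_).symm
  · show Quotient.mk'' (MulOpposite.op k⁻¹ • _) = Quotient.mk'' _
    exact congrArg _ (Subtype.ext (op_smul_coe_set (K.inv_mem hk)))
  · rw [← (isComplement'_stabilizer_of_coprime hH).symm.index_eq_card, hK.index_eq_card]

theorem exists_map_conj_eq_of_isMulCommutative (hH : (Nat.card H).Coprime H.index)
    {A B : Subgroup G} (hA : IsComplement' H A) (hB : IsComplement' H B) :
    ∃ h ∈ H, A.map (MulAut.conj h).toMonoidHom = B := by
  obtain ⟨h, hh⟩ := exists_smul_eq hH hA.symm.quotientDiffMk hB.symm.quotientDiffMk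
  refine ⟨h, h.2, ?_⟩
  rw [← stabilizer_quotientDiffMk hH hA.symm, ← stabilizer_quotientDiffMk hH hB.symm, ← hh]
  exact (MulAction.stabilizer_smul_eq_stabilizer_map_conj (h : G) _).symm

end Abelian

theorem exists_map_conj_eq_of_sup_eq_sup [Finite G] {Z : Subgroup G} [Z.Normal]
    [IsMulCommutative Z] {A B : Subgroup G} (hcop : (Nat.card Z).Coprime (Nat.card A))
    (hA : Disjoint Z A) (hB : Disjoint Z B) (hAB : A ⊔ Z = B ⊔ Z) :
    ∃ z ∈ Z, A.map (MulAut.conj z).toMonoidHom = B := by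
  set W := B ⊔ Z
  have hZW : Z ≤ W := le_sup_right
  have hAW : A ≤ W := hAB ▸ le_sup_left
  have hBW : B ≤ W := le_sup_left
  have hcompl : ∀ C ≤ W, Disjoint Z C → C ⊔ Z = W →
      IsComplement' (Z.subgroupOf W) (C.subgroupOf W) := by
    intro C hCW hZC hCZ
    refine isComplement'_of_isCompl ⟨?_, ?_⟩
    · exact disjoint_def.mpr fun hz hc => Subtype.ext (disjoint_def.mp hZC hz hc)
    · rw [codisjoint_iff, ← subgroupOf_sup hZW hCW, sup_comm, hCZ, subgroupOf_self]
  have hA' := hcompl A hAW hA hAB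
  have hcop' : (Nat.card (Z.subgroupOf W)).Coprime (Z.subgroupOf W).index := by
    rwa [hA'.symm.index_eq_card, Nat.card_congr (subgroupOfEquivOfLe hZW).toEquiv,
      Nat.card_congr (subgroupOfEquivOfLe hAW).toEquiv]
  obtain ⟨z, hz, hzAB⟩ := exists_map_conj_eq_of_isMulCommutative hcop' hA' (hcompl B hBW hB rfl)
  refine ⟨z, hz, ?_⟩
  have := congrArg (map W.subtype) hzAB
  rwa [map_map_conj, map_subgroupOf_eq_of_le hAW, map_subgroupOf_eq_of_le hBW] at this

theorem exists_isComplement'_le_of_sup_eq_top [Finite G] {R L : Subgroup G} [R.Normal]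
    (hcop : (Nat.card R).Coprime R.index) (hL : L ⊔ R = ⊤) : ∃ K ≤ L, IsComplement' R K := by
  have hidx : (R.subgroupOf L).index = R.index := by
    rw [← relIndex, ← relIndex_sup_left, sup_comm, hL, relIndex_top_right]
  have hcard : Nat.card (R.subgroupOf L) ∣ Nat.card R := by
    rw [← card_map_of_injective L.subtype_injective, subgroupOf_map_subtype]
    exact card_dvd_of_le inf_le_left
  obtain ⟨K₀, hK₀⟩ := exists_right_complement'_of_coprime
    (by rw [hidx]; exact hcop.coprime_dvd_left hcard)
  have hK : Nat.card (K₀.map L.subtype) = R.index := by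
    rw [card_map_of_injective L.subtype_injective, ← hidx, hK₀.symm.index_eq_card]
  refine ⟨K₀.map L.subtype, map_subtype_le K₀, isComplement'_of_coprime ?_ ?_⟩
  · rw [hK, card_mul_index]
  · rwa [hK]

end Subgroup

open Subgroup

theorem IsPGroup.exists_map_conj_eq {p : ℕ} [Fact p.Prime] {G : Type*} [Group G] [Finite G]
    {R : Subgroup G} [R.Normal] (hR : IsPGroup p R) (hcop : (Nat.card R).Coprime R.index)
    {A B : Subgroup G} (hA : IsComplement' R A) (hB : IsComplement' R B) :
    ∃ x ∈ R, A.map (MulAut.conj x).toMonoidHom = B := by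
  induction hn : Nat.card G using Nat.strong_induction_on generalizing G with
  | _ n ih =>
  obtain rfl | hRbot := eq_or_ne R ⊥
  · obtain rfl := isComplement'_bot_left.mp hA
    obtain rfl := isComplement'_bot_left.mp hB
    exact ⟨1, one_mem _, by simp⟩
  have : Nontrivial R := (nontrivial_iff_ne_bot R).mpr hRbot
  set Z := (center R).map R.subtype
  have hZR : Z ≤ R := map_subtype_le _
  have hZbot : Z ≠ ⊥ := by
    rw [Ne, map_eq_bot_iff_of_injective _ R.subtype_injective, ← Ne, ← nontrivial_iff_ne_bot]
    exact hR.center_nontrivial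
  set π := QuotientGroup.mk' Z
  have hπ : Function.Surjective π := QuotientGroup.mk'_surjective Z
  have hker : π.ker ≤ R := (QuotientGroup.ker_mk' Z).trans_le hZR
  have hlt : Nat.card (G ⧸ Z) < n := by
    rw [← hn, card_eq_card_quotient_mul_card_subgroup Z]
    exact lt_mul_of_one_lt_right Nat.card_pos (Z.one_lt_card_iff_ne_bot.mpr hZbot)
  have : (R.map π).Normal := Normal.map ‹_› π hπ
  have hcop' : (Nat.card (R.map π)).Coprime (R.map π).index := by
    rw [index_map_eq R hπ hker]
    exact hcop.coprime_dvd_left (R.card_map_dvd π)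
  obtain ⟨_, ⟨x, hxR, rfl⟩, hx⟩ := ih _ hlt (hR.map π) hcop'
    (hA.map_of_ker_le hπ hker) (hB.map_of_ker_le hπ hker) rfl
  set A' := A.map (MulAut.conj x).toMonoidHom
  have hA' : IsComplement' R A' := hA.map_conj x
  have hA'B : A' ⊔ Z = B ⊔ Z := by
    have := congrArg (comap π) ((map_map_conj π x A).trans hx)
    rwa [comap_map_eq, comap_map_eq, QuotientGroup.ker_mk'] at this
  have hcopZ : (Nat.card Z).Coprime (Nat.card A') := by
    rw [← hA'.symm.index_eq_card]
    exact hcop.coprime_dvd_left (card_dvd_of_le hZR)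
  obtain ⟨z, hzZ, hz⟩ := exists_map_conj_eq_of_sup_eq_sup hcopZ
    (hA'.disjoint.mono_left hZR) (hB.disjoint.mono_left hZR) hA'B
  exact ⟨z * x, mul_mem (hZR hzZ) hxR, by rw [← map_conj_map_conj, hz]⟩

/-- Let `p` be a prime, `G` a finite group, `R` a normal `p`-subgroup of `G`, and `s ∈ G` an
element of order coprime to `p` such that `G = R⟨s⟩`. Then a subgroup `L` of `G` satisfies
`LR = G` if and only if there is `x ∈ R` with `x⁻¹sx ∈ L`; moreover, in that case
`L = (L ∩ R)⟨x⁻¹sx⟩` (as a set product) and `L ∩ R` is normalized by `x⁻¹sx`. -/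
theorem stmt7 (p : ℕ) (hp : p.Prime) (G : Type*) [Group G] [Fintype G]
    (R : Subgroup G) [R.Normal] (hpR : IsPGroup p R)
    (s : G) (hs : Nat.Coprime (orderOf s) p)
    (hgen : R ⊔ Subgroup.zpowers s = ⊤) (L : Subgroup G) :
    ((L : Set G) * (R : Set G) = Set.univ ↔ ∃ x ∈ R, x⁻¹ * s * x ∈ L) ∧
    (∀ x ∈ R, x⁻¹ * s * x ∈ L →
      (L : Set G) = ((L ⊓ R : Subgroup G) : Set G)
          * ((Subgroup.zpowers (x⁻¹ * s * x) : Subgroup G) : Set G) ∧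
      x⁻¹ * s * x ∈ Subgroup.normalizer ((L ⊓ R : Subgroup G) : Set G)) := by
  have := Fact.mk hp
  obtain ⟨k, hk⟩ := IsPGroup.iff_card.mp hpR
  have hcop : (Nat.card R).Coprime (orderOf s) := hk ▸ hs.symm.pow_left k
  have hRs : IsComplement' R (zpowers s) := isComplement'_of_isCompl
    ⟨disjoint_of_coprime_natCard (by rwa [Nat.card_zpowers]), codisjoint_iff.mpr hgen⟩
  have hcopR : (Nat.card R).Coprime R.index := by
    rwa [hRs.symm.index_eq_card, Nat.card_zpowers]
  have hconj (x : G) : IsComplement' R (zpowers (x⁻¹ * s * x)) := by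
    simpa [MonoidHom.map_zpowers, MulAut.conj_apply] using hRs.map_conj x⁻¹
  refine ⟨⟨fun hLR => ?_, fun ⟨x, _, hx⟩ => ?_⟩, fun x _ hx => ⟨?_, ?_⟩⟩
  · obtain ⟨K, hKL, hK⟩ := exists_isComplement'_le_of_sup_eq_top hcopR
      (coe_eq_univ.mp (by rw [mul_normal, hLR]))
    obtain ⟨x, hxR, hxK⟩ := hpR.exists_map_conj_eq hcopR hRs hK
    refine ⟨x⁻¹, inv_mem hxR, hKL (hxK ▸ ⟨s, mem_zpowers s, ?_⟩)⟩
    simp [MulAut.conj_apply]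
  · rw [← mul_normal, coe_eq_univ, eq_top_iff, ← (hconj x).sup_eq_top, sup_comm]
    exact sup_le_sup_right (zpowers_le.mpr hx) R
  · rw [inf_mul_assoc L R _ (zpowers_le.mpr hx), ← normal_mul, (hconj x).sup_eq_top, coe_top,
      Set.inter_univ]
  · exact inf_normalizer_le_normalizer_inf ⟨le_normalizer hx, le_normalizer_of_normal (mem_top _)⟩
end

section
/- Let k be an algebraically closed field, H a finite group, and N a normal subgroup of H such that the quotient H/N is cyclic of order e, where e is invertible in k. Let V be a finite-dimensional k-vector space carrying a simple k[N]-module structure, and let g ∈ H be an element whose image generates H/N; assume the g-conjugate k[N]-module structure on V (in which n ∈ N acts as gng⁻¹ acts in the original structure) is isomorphic to the original one. Then there exist e k[H]-module structures on V, pairwise non-isomorphic as k[H]-modules, each of whose restrictions to k[N] is the given k[N]-module structure. -/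
/-!
Since `φ` intertwines `ρ` with its `g`-conjugate, `φ ^ e` and `ρ (g ^ e)` induce the same
conjugation on `ρ(N)`, so by Schur's lemma they differ by a scalar; dividing `φ` by an `e`-th
root of that scalar gives `Φ` with `Φ ^ e = ρ (g ^ e)`. For a primitive `e`-th root of unity `ζ`,
each `ζ ^ i • Φ` still satisfies both relations, so `g ^ m * n ↦ (ζ ^ i • Φ) ^ m * ρ n` is a
well-defined representation of `H`. An isomorphism between two of these commutes with `ρ(N)`,
hence is a scalar by Schur again, which forces `ζ ^ i = ζ ^ j`.
-/

section Extension

variable {H M : Type*} [Group H] [Group M] {N : Subgroup H} [N.Normal]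

theorem conj_zpow_apply_eq_of_conj_apply_eq (r : N →* M) {Φ : M} {g : H}
    (hconj : ∀ n : N, MulAut.conj Φ (r n) = r (MulAut.conjNormal g n)) (m : ℤ) (n : N) :
    MulAut.conj (Φ ^ m) (r n) = r (MulAut.conjNormal (g ^ m) n) := by
  let S : Subgroup (M × H) :=
    { carrier := {p | ∀ n : N, MulAut.conj p.1 (r n) = r (MulAut.conjNormal p.2 n)}
      mul_mem' := fun {p q} hp hq n => by
        simp only [Prod.fst_mul, Prod.snd_mul, map_mul, MulAut.mul_apply]
        rw [hq n, hp]
      one_mem' := fun n => by simp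
      inv_mem' := fun {p} hp n => (MulAut.conj p.1).injective <| by
        rw [Prod.fst_inv, Prod.snd_inv, hp]
        simp only [← MulAut.mul_apply, ← map_mul, mul_inv_cancel, map_one, MulAut.one_apply] }
  exact S.zpow_mem (x := (Φ, g)) hconj m n

theorem zpow_eq_of_pow_orderOf_mk_eq (r : N →* M) {Φ : M} {g : H} {x : N}
    (hx : (x : H) = g ^ orderOf (g : H ⧸ N)) (hΦ : Φ ^ orderOf (g : H ⧸ N) = r x)
    {m : ℤ} {n : N} (hmn : g ^ m = n) : Φ ^ m = r n := by
  obtain ⟨t, rfl⟩ : (orderOf (g : H ⧸ N) : ℤ) ∣ m := by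
    rw [orderOf_dvd_iff_zpow_eq_one, ← QuotientGroup.mk_zpow, hmn, QuotientGroup.eq_one_iff]
    exact n.2
  have hxt : x ^ t = n :=
    Subtype.ext (by rw [Subgroup.coe_zpow, hx, ← zpow_natCast, ← zpow_mul, hmn])
  rw [zpow_mul, zpow_natCast, hΦ, ← map_zpow, hxt]

theorem conj_pow_apply_eq_conj_map_apply (r : N →* M) {Φ : M} {g : H}
    (hconj : ∀ n : N, MulAut.conj Φ (r n) = r (MulAut.conjNormal g n)) {e : ℕ} {x : N}
    (hx : (x : H) = g ^ e) (n : N) : MulAut.conj (Φ ^ e) (r n) = MulAut.conj (r x) (r n) := by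
  rw [← zpow_natCast, conj_zpow_apply_eq_of_conj_apply_eq r hconj, MulAut.conj_apply, ← map_inv,
    ← map_mul, ← map_mul]
  congr 1
  ext
  rw [zpow_natCast, MulAut.conjNormal_apply, Subgroup.coe_mul, Subgroup.coe_mul,
    Subgroup.coe_inv, hx]

theorem exists_monoidHom_extend_of_zpowers_mk_eq_top {g : H}
    (hg : Subgroup.zpowers (g : H ⧸ N) = ⊤) (r : N →* M) {Φ : M}
    (hconj : ∀ n : N, MulAut.conj Φ (r n) = r (MulAut.conjNormal g n)) {x : N}
    (hx : (x : H) = g ^ orderOf (g : H ⧸ N)) (hΦ : Φ ^ orderOf (g : H ⧸ N) = r x) :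
    ∃ P : H →* M, (∀ n : N, P n = r n) ∧ P g = Φ := by
  have hdecomp (h : H) : ∃ (m : ℤ) (n : N), g ^ m * n = h := by
    obtain ⟨m, hm⟩ := Subgroup.mem_zpowers_iff.mp (hg ▸ Subgroup.mem_top (h : H ⧸ N))
    rw [← QuotientGroup.mk_zpow, QuotientGroup.eq] at hm
    exact ⟨m, ⟨_, hm⟩, mul_inv_cancel_left _ _⟩
  choose m n hmn using hdecomp
  have hwd {a b : ℤ} {x y : N} (h : g ^ a * x = g ^ b * y) : Φ ^ a * r x = Φ ^ b * r y := by
    have hab : g ^ (a - b) = ((y * x⁻¹ : N) : H) := by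
      rw [sub_eq_neg_add, zpow_add, Subgroup.coe_mul, Subgroup.coe_inv, eq_mul_inv_iff_mul_eq,
        mul_assoc, h]
      group
    rw [← add_sub_cancel b a, zpow_add, zpow_eq_of_pow_orderOf_mk_eq r hx hΦ hab, map_mul,
      map_inv]
    group
  have hmul (a b : ℤ) (x y : N) : Φ ^ a * r x * (Φ ^ b * r y)
      = Φ ^ (a + b) * r (MulAut.conjNormal (g ^ (-b)) x * y) := by
    rw [map_mul, ← conj_zpow_apply_eq_of_conj_apply_eq r hconj, MulAut.conj_apply]
    group
  have hval {a : ℤ} {x : N} {h : H} (hax : g ^ a * x = h) : Φ ^ m h * r (n h) = Φ ^ a * r x :=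
    hwd ((hmn h).trans hax.symm)
  refine ⟨MonoidHom.mk' (fun h => Φ ^ m h * r (n h)) fun h₁ h₂ => ?_,
    fun x => (hval (a := 0) (x := x) (by simp)).trans (by simp),
    (hval (a := 1) (x := 1) (by simp)).trans (by simp)⟩
  rw [hmul, hval]
  conv_rhs => rw [← hmn h₁, ← hmn h₂]
  simp only [Subgroup.coe_mul, MulAut.conjNormal_apply]
  group

end Extension

namespace Module.End

def scalarUnits (k V : Type*) [Field k] [AddCommGroup V] [Module k V] :
    kˣ →* (Module.End k V)ˣ :=
  Units.map (algebraMap k (Module.End k V)).toMonoidHom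

variable {k V : Type*} [Field k] [AddCommGroup V] [Module k V]

theorem commute_scalarUnits (z : kˣ) (u : (Module.End k V)ˣ) : Commute (scalarUnits k V z) u :=
  Units.ext (Algebra.commutes _ _)

theorem scalarUnits_injective [Nontrivial V] : Function.Injective (scalarUnits k V) :=
  fun _ _ h => Units.ext ((algebraMap k (Module.End k V)).injective (congrArg Units.val h))

theorem conj_scalarUnits_mul (z : kˣ) (u : (Module.End k V)ˣ) :
    MulAut.conj (scalarUnits k V z * u) = MulAut.conj u := by
  ext x
  rw [map_mul, MulAut.mul_apply, MulAut.conj_apply, (commute_scalarUnits z _).eq,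
    mul_inv_cancel_right]

theorem scalarUnits_mul_pow (z : kˣ) (u : (Module.End k V)ˣ) (e : ℕ) :
    (scalarUnits k V z * u) ^ e = scalarUnits k V (z ^ e) * u ^ e := by
  rw [(commute_scalarUnits z u).mul_pow, map_pow]

end Module.End

open Module.End

namespace Representation

variable {k G V : Type*} [Field k] [AddCommGroup V] [Module k V]

theorem conj_asGroupHom_eq_iff [Group G] (ρ : Representation k G V) (u : (Module.End k V)ˣ)
    (a b : G) :
    MulAut.conj u (ρ.asGroupHom a) = ρ.asGroupHom b ↔
      (u : Module.End k V) ∘ₗ ρ a = ρ b ∘ₗ u := by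
  rw [MulAut.conj_apply, mul_inv_eq_iff_eq_mul, Units.ext_iff]
  rfl

theorem IsIrreducible.nontrivial [Monoid G] (ρ : Representation k G V) [ρ.IsIrreducible] :
    Nontrivial V :=
  IsSimpleModule.nontrivial (MonoidAlgebra k G) ρ.asModule

variable [IsAlgClosed k] [FiniteDimensional k V]

theorem IsIrreducible.exists_eq_algebraMap [Monoid G] {ρ : Representation k G V} [ρ.IsIrreducible]
    {f : Module.End k V} (hf : ∀ g, f ∘ₗ ρ g = ρ g ∘ₗ f) :
    ∃ c : k, f = algebraMap k (Module.End k V) c := by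
  obtain ⟨c, hc⟩ := algebraMap_intertwiningMap_bijective_of_isAlgClosed.2 ⟨f, hf⟩
  refine ⟨c, ?_⟩
  rw [Algebra.algebraMap_eq_smul_one]
  exact congrArg IntertwiningMap.toLinearMap hc.symm

theorem IsIrreducible.exists_eq_scalarUnits [Group G] {ρ : Representation k G V} [ρ.IsIrreducible]
    {u : (Module.End k V)ˣ} (hu : ∀ g, MulAut.conj u (ρ.asGroupHom g) = ρ.asGroupHom g) :
    ∃ z : kˣ, u = scalarUnits k V z := by
  have := IsIrreducible.nontrivial ρ
  obtain ⟨c, hc⟩ := exists_eq_algebraMap fun g => (conj_asGroupHom_eq_iff ρ u g g).1 (hu g)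
  have hc0 : c ≠ 0 := by
    rintro rfl
    exact u.ne_zero (by rw [hc, map_zero])
  exact ⟨Units.mk0 c hc0, Units.ext hc⟩

theorem IsIrreducible.exists_scalarUnits_mul_pow_eq [Group G] {ρ : Representation k G V}
    [ρ.IsIrreducible] {e : ℕ} (he : e ≠ 0) (φ x : (Module.End k V)ˣ)
    (h : ∀ g, MulAut.conj (φ ^ e) (ρ.asGroupHom g) = MulAut.conj x (ρ.asGroupHom g)) :
    ∃ d : kˣ, scalarUnits k V (d ^ e) * φ ^ e = x := by
  obtain ⟨c, hc⟩ := exists_eq_scalarUnits (u := x⁻¹ * φ ^ e) fun g => by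
    rw [map_mul, MulAut.mul_apply, h, ← MulAut.mul_apply, ← map_mul, inv_mul_cancel, map_one,
      MulAut.one_apply]
  obtain ⟨d, hd⟩ := IsAlgClosed.exists_pow_nat_eq (c : k) (Nat.pos_of_ne_zero he)
  have hd0 : d ≠ 0 := by
    rintro rfl
    exact c.ne_zero (by rw [← hd, zero_pow he])
  have hde : Units.mk0 d hd0 ^ e = c := Units.ext (by simp [hd])
  refine ⟨(Units.mk0 d hd0)⁻¹, ?_⟩
  rw [inv_pow, hde, inv_mul_eq_iff_eq_mul.mp hc, (commute_scalarUnits _ x).left_comm, ← map_mul,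
    inv_mul_cancel, map_one, mul_one]

theorem IsIrreducible.eq_of_linearEquiv_intertwines {H : Type*} [Group H] {N : Subgroup H}
    {ρ : Representation k N V} [ρ.IsIrreducible] {π π' : Representation k H V}
    (hπ : ∀ n : N, π n = ρ n) (hπ' : ∀ n : N, π' n = ρ n) (ψ : V ≃ₗ[k] V)
    (hψ : ∀ h, (ψ : Module.End k V) ∘ₗ π h = π' h ∘ₗ ψ) : π = π' := by
  have := IsIrreducible.nontrivial ρ
  obtain ⟨c, hc⟩ := exists_eq_algebraMap (ρ := ρ) (f := ψ) fun n => by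
    rw [← hπ n, hψ, hπ', hπ]
  have hc0 : c ≠ 0 := by
    rintro rfl
    obtain ⟨v, hv⟩ := exists_ne (0 : V)
    exact hv (ψ.injective (by simpa using LinearMap.congr_fun hc v))
  rw [Module.algebraMap_end_eq_smul_id] at hc
  ext1 h
  apply smul_right_injective (Module.End k V) hc0
  simpa only [hc, LinearMap.smul_comp, LinearMap.comp_smul, LinearMap.id_comp,
    LinearMap.comp_id] using hψ h

end Representation

open Representation in
theorem stmt10_general (k : Type*) [Field k] [IsAlgClosed k]
    (H : Type*) [Group H] (N : Subgroup H) [hN : N.Normal]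
    (e : ℕ) (hcard : Nat.card (H ⧸ N) = e)
    (he : (e : k) ≠ 0)
    (V : Type*) [AddCommGroup V] [Module k V] [FiniteDimensional k V]
    (ρ : Representation k N V)
    (hsimple : IsSimpleModule (MonoidAlgebra k N) ρ.asModule)
    (g : H) (hg : Subgroup.zpowers (QuotientGroup.mk g : H ⧸ N) = ⊤)
    (hconj : ∃ φ : V ≃ₗ[k] V, ∀ n : N,
      (φ : V →ₗ[k] V) ∘ₗ (ρ n)
        = (ρ ⟨g * (n : H) * g⁻¹, hN.conj_mem (n : H) n.2 g⟩) ∘ₗ (φ : V →ₗ[k] V)) :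
    ∃ π : Fin e → Representation k H V,
      (∀ i : Fin e, ∀ n : N, π i (n : H) = ρ n) ∧
      (∀ i j : Fin e, i ≠ j →
        ¬ ∃ ψ : V ≃ₗ[k] V, ∀ h : H,
          (ψ : V →ₗ[k] V) ∘ₗ (π i h) = (π j h) ∘ₗ (ψ : V →ₗ[k] V)) := by
  obtain ⟨φ, hφ⟩ := hconj
  have : ρ.IsIrreducible := (irreducible_iff_isSimpleModule_asModule ρ).mpr hsimple
  have : Nontrivial V := IsIrreducible.nontrivial ρ
  have : NeZero (e : k) := ⟨he⟩
  have he0 : e ≠ 0 := (NeZero.of_neZero_natCast k).ne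
  have horder : orderOf (g : H ⧸ N) = e := by
    rw [← Nat.card_zpowers, hg, Subgroup.card_top, hcard]
  let r := ρ.asGroupHom
  let φu := (LinearMap.GeneralLinearGroup.generalLinearEquiv k V).symm φ
  have hφu (n : N) : MulAut.conj φu (r n) = r (MulAut.conjNormal g n) :=
    (conj_asGroupHom_eq_iff ρ φu _ _).2 (hφ n)
  let x : N := ⟨g ^ e, by
    rw [← QuotientGroup.eq_one_iff, QuotientGroup.mk_pow, ← horder, pow_orderOf_eq_one]⟩
  obtain ⟨d, hd⟩ := IsIrreducible.exists_scalarUnits_mul_pow_eq he0 φu (r x)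
    (conj_pow_apply_eq_conj_map_apply r hφu rfl)
  obtain ⟨ζ, hζ⟩ := HasEnoughRootsOfUnity.exists_primitiveRoot k e
  lift ζ to kˣ using hζ.isUnit he0
  rw [IsPrimitiveRoot.coe_units_iff] at hζ
  have hext (i : Fin e) := exists_monoidHom_extend_of_zpowers_mk_eq_top hg r
    (Φ := scalarUnits k V (ζ ^ (i : ℕ) * d) * φu) (fun n => by rw [conj_scalarUnits_mul, hφu])
    (x := x) (by rw [horder]) (by
      rw [horder, scalarUnits_mul_pow, mul_pow, ← pow_mul, mul_comm (i : ℕ), pow_mul,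
        hζ.pow_eq_one, one_pow, one_mul, hd])
  choose P hPN hPg using hext
  let π (i : Fin e) : Representation k H V := (Units.coeHom _).comp (P i)
  have hπN (i : Fin e) (n : N) : π i n = ρ n := congrArg Units.val (hPN i n)
  refine ⟨π, hπN, fun i j hij ⟨ψ, hψ⟩ => hij ?_⟩
  have hPg' : P i g = P j g :=
    Units.ext (DFunLike.congr_fun (IsIrreducible.eq_of_linearEquiv_intertwines
      (hπN i) (hπN j) ψ hψ) g)
  rw [hPg, hPg] at hPg'
  exact Fin.ext (hζ.pow_inj i.2 j.2
    (mul_right_cancel (scalarUnits_injective (mul_right_cancel hPg'))))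

/-- Let `k` be an algebraically closed field, `H` a finite group, `N` a normal subgroup with
`H/N` cyclic of order `e`, where `e` is invertible in `k`. Let `V` be a finite-dimensional
`k`-vector space with a simple `k[N]`-module structure (a representation `ρ` of `N` on `V`),
and `g ∈ H` an element whose image generates `H/N`, such that the `g`-conjugate module
structure (where `n` acts as `gng⁻¹` does in `ρ`) is isomorphic to `ρ`. Then there exist `e`
`k[H]`-module structures on `V`, pairwise non-isomorphic as `k[H]`-modules, each restricting
to the given `k[N]`-module structure. -/
theorem stmt10 (k : Type*) [Field k] [IsAlgClosed k]
    (H : Type*) [Group H] [Fintype H] (N : Subgroup H) [hN : N.Normal]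
    (e : ℕ) (hcyc : IsCyclic (H ⧸ N)) (hcard : Nat.card (H ⧸ N) = e)
    (he : (e : k) ≠ 0)
    (V : Type*) [AddCommGroup V] [Module k V] [FiniteDimensional k V]
    (ρ : Representation k N V)
    (hsimple : IsSimpleModule (MonoidAlgebra k N) ρ.asModule)
    (g : H) (hg : Subgroup.zpowers (QuotientGroup.mk g : H ⧸ N) = ⊤)
    (hconj : ∃ φ : V ≃ₗ[k] V, ∀ n : N,
      (φ : V →ₗ[k] V) ∘ₗ (ρ n)
        = (ρ ⟨g * (n : H) * g⁻¹, hN.conj_mem (n : H) n.2 g⟩) ∘ₗ (φ : V →ₗ[k] V)) :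
    ∃ π : Fin e → Representation k H V,
      (∀ i : Fin e, ∀ n : N, π i (n : H) = ρ n) ∧
      (∀ i j : Fin e, i ≠ j →
        ¬ ∃ ψ : V ≃ₗ[k] V, ∀ h : H,
          (ψ : V →ₗ[k] V) ∘ₗ (π i h) = (π j h) ∘ₗ (ψ : V →ₗ[k] V)) :=
  stmt10_general k H N (hN := hN) e hcard he V ρ hsimple g hg hconj
end
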